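/- Let k be a commutative ring in which d! = 0 (and d! is not invertible). In the graded Hopf algebra H^*(ΩΣℂP^d;k) = TC(H^+(ℂP^d;k))^∨-dual description, the degree-2 generator x_2 satisfies x_2^d ≠ 0, while in H^*(Ω(S^3 ∨ … ∨ S^{2d+1});k), the tensor coalgebra with shuffle product on generators of degrees 2,4,…,2d, the corresponding degree-2 generator satisfies x_2^d = d!·[x_2|…|x_2] = 0. Consequently these two graded algebras are not isomorphic when d! = 0 in k. -/

import Mathlib

/-!
STATEMENT 18.  Let `k` be a (nontrivial) commutative ring with `d! = 0`.
The loop space cohomologies `H^*(ΩΣℂP^d;k)` and `H^*(Ω(S³ ∨ … ∨ S^{2d+1});k)`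
are both modeled on the tensor coalgebra on generators `x₂, x₄, …, x_{2d}`
(free module on words in `Fin d`, the letter `i` having degree `2(i+1)`),
with product obtained by tensorization: for `ℂP^d` this is the step-by-step
path product associated with the cup product `x_{2i}·x_{2j} = x_{2(i+j)}`
(truncated above `2d`), and for the wedge of spheres the cup product is
trivial, giving the shuffle product.  Then `x₂^d ≠ 0` in the first algebra,
while in the second `x₂^d = d!·[x₂|…|x₂] = 0`; consequently the two graded
algebras are not isomorphic.  (All degrees are even, so no signs occur.)
-/

def sgn (m : ℤ) : ℤ := if Even m then 1 else -1

def degW {B : Type*} (deg : B → ℤ) (l : List B) : ℤ := (l.map deg).sum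

noncomputable def pathProd (k : Type*) {B : Type*} [CommRing k] (deg : B → ℤ)
    (m : B → B → (B →₀ k)) : List B → List B → (List B →₀ k)
  | [], l => Finsupp.single l 1
  | a :: x, [] => Finsupp.single (a :: x) 1
  | a :: x, b :: y =>
      (pathProd k deg m x (b :: y)).mapDomain (a :: ·)
      + sgn (deg b * (deg a + degW deg x)) •
          (pathProd k deg m (a :: x) y).mapDomain (b :: ·)
      + sgn (deg b * degW deg x) •
          ((m a b).sum fun c coef =>
            coef • (pathProd k deg m x y).mapDomain (c :: ·))
  termination_by x y => x.length + y.length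

/-- Bilinear extension of a product defined on words. -/
noncomputable def bilF {k B : Type*} [CommRing k]
    (μ : List B → List B → (List B →₀ k)) (f g : List B →₀ k) : List B →₀ k :=
  f.sum fun l c => g.sum fun l' c' => (c * c') • μ l l'

/-- `n`-th power of `x` for the product `μ` (with `x⁰ = []`, the unit). -/
noncomputable def powF {k B : Type*} [CommRing k]
    (μ : List B → List B → (List B →₀ k)) (x : List B →₀ k) : ℕ → (List B →₀ k)
  | 0 => Finsupp.single [] 1
  | n + 1 => bilF μ (powF μ x n) x

/-- The degree of the generator `x_{2(i+1)}`. -/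
def degCP (d : ℕ) (i : Fin d) : ℤ := 2 * ((i : ℕ) + 1)

/-- The cup product of `H^+(ℂP^d)`: `x_{2(i+1)}·x_{2(j+1)} = x_{2(i+j+2)}`,
truncated when the degree exceeds `2d`. -/
noncomputable def cupCP (k : Type*) [CommRing k] (d : ℕ) (i j : Fin d) : Fin d →₀ k :=
  if h : (i : ℕ) + (j : ℕ) + 2 ≤ d then
    Finsupp.single ⟨(i : ℕ) + (j : ℕ) + 1, by omega⟩ 1
  else 0

/-- Homogeneous component of (total) degree `n` of the tensor coalgebra. -/
noncomputable def homogCP (k : Type*) [CommRing k] (d : ℕ) (n : ℤ) : Submodule k (List (Fin d) →₀ k) :=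
  Submodule.span k {f | ∃ l : List (Fin d), degW (degCP d) l = n ∧ f = Finsupp.single l 1}

/-!
Since all generators have even degree, no signs occur. With the trivial cup product the
product is the shuffle product, so `[x₂]^n = n!·[x₂|…|x₂]`; as `d! = 0`, the `d`-th power of
every multiple of `x₂` vanishes. For `ℂP^d` the diagonal steps of the path product multiply the
one-letter words like the cup product, so the coefficient of `[x_{2d}]` in `x₂^d` is `1`.
A degree-preserving algebra isomorphism sends `x₂` to a multiple `c·x₂` (the degree-2 part is
spanned by `x₂`), hence `x₂^d ≠ 0` to `(c·x₂)^d = 0`, contradicting injectivity.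
-/

section PathProd

variable {k B : Type*} [CommRing k] (deg : B → ℤ) (m : B → B → (B →₀ k))

lemma sgn_zero : sgn 0 = 1 := if_pos Even.zero

lemma sgn_mul_of_even_left {a : ℤ} (ha : Even a) (t : ℤ) : sgn (a * t) = 1 :=
  if_pos (ha.mul_right t)

lemma mapDomain_cons_apply_nil (a : B) (F : List B →₀ k) : F.mapDomain (a :: ·) [] = 0 :=
  Finsupp.mapDomain_of_notMem_range F [] (by simp)

lemma mapDomain_cons_apply_cons [DecidableEq B] (a c : B) (F : List B →₀ k) (w : List B) :
    F.mapDomain (a :: ·) (c :: w) = if c = a then F w else 0 := by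
  split_ifs with h
  · subst h
    exact Finsupp.mapDomain_apply List.cons_injective F w
  · exact Finsupp.mapDomain_of_notMem_range F _ (by simp [Ne.symm h])

lemma bilF_single_single (μ : List B → List B → (List B →₀ k)) (l l' : List B) (c c' : k) :
    bilF μ (Finsupp.single l c) (Finsupp.single l' c') = (c * c') • μ l l' := by
  rw [bilF, Finsupp.sum_single_index (by simp), Finsupp.sum_single_index (by simp)]

lemma bilF_single_one_right_apply (μ : List B → List B → (List B →₀ k)) (F : List B →₀ k)
    (t w : List B) : bilF μ F (Finsupp.single t 1) w = F.sum fun l c => c * μ l t w := by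
  rw [bilF, Finsupp.sum_apply]
  refine Finsupp.sum_congr fun l _ => ?_
  rw [Finsupp.sum_single_index (by simp)]
  simp

lemma map_powF {μ ν : List B → List B → (List B →₀ k)} (e : (List B →₀ k) → (List B →₀ k))
    (he_mul : ∀ f g, e (bilF μ f g) = bilF ν (e f) (e g))
    (he_one : e (Finsupp.single [] 1) = Finsupp.single [] 1) (x : List B →₀ k) :
    ∀ n, e (powF μ x n) = powF ν (e x) n
  | 0 => he_one
  | n + 1 => by rw [powF, he_mul, map_powF e he_mul he_one x n, powF]

lemma pathProd_nil_left (l : List B) : pathProd k deg m [] l = Finsupp.single l 1 := by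
  rw [pathProd]

lemma pathProd_cons_nil (a : B) (x : List B) :
    pathProd k deg m (a :: x) [] = Finsupp.single (a :: x) 1 := by
  rw [pathProd]

lemma pathProd_cons_cons (a b : B) (x y : List B) : pathProd k deg m (a :: x) (b :: y) =
      (pathProd k deg m x (b :: y)).mapDomain (a :: ·)
      + sgn (deg b * (deg a + degW deg x)) •
          (pathProd k deg m (a :: x) y).mapDomain (b :: ·)
      + sgn (deg b * degW deg x) •
          ((m a b).sum fun c coef => coef • (pathProd k deg m x y).mapDomain (c :: ·)) := by
  rw [pathProd]

lemma pathProd_cons_apply_nil (a : B) (x y : List B) : pathProd k deg m (a :: x) y [] = 0 := by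
  cases y with
  | nil => rw [pathProd_cons_nil]; exact Finsupp.single_eq_of_ne (by simp)
  | cons b y =>
    rw [pathProd_cons_cons]
    simp only [Finsupp.add_apply, Finsupp.smul_apply, Finsupp.sum_apply]
    simp [mapDomain_cons_apply_nil]

lemma pathProd_singleton_singleton_apply_singleton (a u c : B) :
    pathProd k deg m [a] [u] [c] = m a u c := by
  classical
  rw [pathProd_cons_cons, pathProd_nil_left, pathProd_cons_nil, pathProd_nil_left]
  simp only [Finsupp.add_apply, Finsupp.smul_apply, Finsupp.sum_apply]
  simp [Finsupp.single_apply, degW, sgn_zero, eq_comm]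

lemma pathProd_cons_cons_singleton_apply_singleton (a b u c : B) (t : List B) :
    pathProd k deg m (a :: b :: t) [u] [c] = 0 := by
  classical
  rw [pathProd_cons_cons, pathProd_cons_nil, pathProd_cons_nil]
  simp only [Finsupp.add_apply, Finsupp.smul_apply, Finsupp.sum_apply]
  simp [mapDomain_cons_apply_cons, pathProd_cons_apply_nil]

end PathProd

section Shuffle

variable {k B : Type*} [CommRing k] {deg : B → ℤ} {a : B}

lemma pathProd_zero_replicate_singleton (ha : Even (deg a)) (n : ℕ) :
    pathProd k deg (fun _ _ => 0) (List.replicate n a) [a]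
      = Finsupp.single (List.replicate (n + 1) a) ((n + 1 : ℕ) : k) := by
  induction n with
  | zero => simp [pathProd_nil_left]
  | succ n ih =>
    rw [List.replicate_succ, pathProd_cons_cons, ih, pathProd_cons_nil]
    simp only [Finsupp.sum_zero_index, smul_zero, add_zero, sgn_mul_of_even_left ha, one_smul,
      Finsupp.mapDomain_single, ← List.replicate_succ, ← Finsupp.single_add]
    push_cast
    ring_nf

lemma powF_pathProd_zero_single_singleton (ha : Even (deg a)) (c : k) (n : ℕ) :
    powF (pathProd k deg (fun _ _ => 0)) (Finsupp.single [a] c) n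
      = Finsupp.single (List.replicate n a) ((n.factorial : k) * c ^ n) := by
  induction n with
  | zero => simp [powF]
  | succ n ih =>
    rw [powF, ih, bilF_single_single, pathProd_zero_replicate_singleton ha, Finsupp.smul_single,
      smul_eq_mul, Nat.factorial_succ, pow_succ]
    push_cast
    ring_nf

end Shuffle

section ProjectiveSpace

variable {k : Type*} [CommRing k] {d : ℕ}

lemma cupCP_apply_zero_apply_succ (hd : 1 ≤ d) (a : Fin d) (n : ℕ) (hn : n + 1 < d) :
    cupCP k d a ⟨0, hd⟩ ⟨n + 1, hn⟩ = if (a : ℕ) = n then 1 else 0 := by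
  unfold cupCP
  split_ifs <;> simp_all [Fin.ext_iff]
  omega

lemma pathProd_cupCP_singleton_apply_succ (hd : 1 ≤ d) (l : List (Fin d)) (n : ℕ)
    (hn : n + 1 < d) :
    pathProd k (degCP d) (cupCP k d) l [⟨0, hd⟩] [⟨n + 1, hn⟩]
      = if l = [⟨n, by omega⟩] then 1 else 0 :=
  match l with
  | [] => by simp [pathProd_nil_left]
  | [a] => by
    rw [pathProd_singleton_singleton_apply_singleton, cupCP_apply_zero_apply_succ]
    simp [Fin.ext_iff]
  | a :: b :: t => by simp [pathProd_cons_cons_singleton_apply_singleton]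

lemma powF_cupCP_apply_singleton (hd : 1 ≤ d) (n : ℕ) (hn : n < d) :
    powF (pathProd k (degCP d) (cupCP k d)) (Finsupp.single [⟨0, hd⟩] 1) (n + 1) [⟨n, hn⟩]
      = 1 := by
  induction n with
  | zero => simp [powF, bilF_single_single, pathProd_nil_left]
  | succ n ih =>
    rw [powF, bilF_single_one_right_apply]
    simp only [pathProd_cupCP_singleton_apply_succ, mul_ite, mul_one, mul_zero,
      Finsupp.sum_ite_self_eq']
    exact ih (by omega)

end ProjectiveSpace

section Grading

variable {d : ℕ}

lemma two_mul_length_le_degW_degCP (l : List (Fin d)) : 2 * (l.length : ℤ) ≤ degW (degCP d) l := by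
  induction l with
  | nil => simp [degW]
  | cons a l ih =>
    simp only [degW, degCP, List.map_cons, List.sum_cons, List.length_cons] at ih ⊢
    push_cast
    omega

lemma eq_singleton_of_degW_degCP_eq_two (hd : 1 ≤ d) {l : List (Fin d)}
    (hl : degW (degCP d) l = 2) : l = [⟨0, hd⟩] :=
  match l, hl with
  | [], hl => by simp [degW] at hl
  | [a], hl => by
    simp only [degW, degCP, List.map_cons, List.map_nil, List.sum_cons, List.sum_nil] at hl
    simp only [List.cons.injEq, Fin.ext_iff, and_true]
    omega
  | a :: b :: t, hl => by
    have hlen := two_mul_length_le_degW_degCP (a :: b :: t)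
    simp only [List.length_cons] at hlen
    omega

lemma exists_eq_single_of_mem_homogCP_two {k : Type*} [CommRing k] (hd : 1 ≤ d)
    {f : List (Fin d) →₀ k} (hf : f ∈ homogCP k d 2) : ∃ c : k, f = Finsupp.single [⟨0, hd⟩] c := by
  have hle : homogCP k d 2 ≤ k ∙ Finsupp.single [⟨0, hd⟩] 1 := by
    refine Submodule.span_le.mpr ?_
    rintro _ ⟨l, hl, rfl⟩
    rw [eq_singleton_of_degW_degCP_eq_two hd hl]
    exact Submodule.mem_span_singleton_self _
  obtain ⟨c, rfl⟩ := Submodule.mem_span_singleton.mp (hle hf)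
  exact ⟨c, Finsupp.smul_single_one _ c⟩

end Grading

theorem CPd_vs_wedge_of_spheres (k : Type*) [CommRing k] [Nontrivial k]
    (d : ℕ) (hd : 1 ≤ d) (hfac : ((Nat.factorial d : ℕ) : k) = 0) :
    -- `x₂^d ≠ 0` in `H^*(ΩΣℂP^d)`
    powF (pathProd k (degCP d) (cupCP k d)) (Finsupp.single [⟨0, hd⟩] 1) d ≠ 0 ∧
    -- `x₂^d = d!·[x₂|…|x₂] = 0` in `H^*(Ω(S³ ∨ … ∨ S^{2d+1}))`
    (powF (pathProd k (degCP d) (fun _ _ => 0)) (Finsupp.single [⟨0, hd⟩] 1) d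
        = ((Nat.factorial d : ℕ) : k) •
            Finsupp.single (List.replicate d ⟨0, hd⟩) 1 ∧
      powF (pathProd k (degCP d) (fun _ _ => 0)) (Finsupp.single [⟨0, hd⟩] 1) d = 0) ∧
    -- consequently there is no isomorphism of graded algebras between them
    ¬ ∃ e : (List (Fin d) →₀ k) ≃ₗ[k] (List (Fin d) →₀ k),
        (∀ f g, e (bilF (pathProd k (degCP d) (cupCP k d)) f g)
            = bilF (pathProd k (degCP d) (fun _ _ => 0)) (e f) (e g)) ∧
        e (Finsupp.single [] 1) = Finsupp.single [] 1 ∧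
        (∀ (n : ℤ) (f), f ∈ homogCP k d n → e f ∈ homogCP k d n) := by
  have hx₂ : Even (degCP d ⟨0, hd⟩) := ⟨1, by simp [degCP]⟩
  have wedge_pow_eq_zero (c : k) :
      powF (pathProd k (degCP d) (fun _ _ => 0)) (Finsupp.single [⟨0, hd⟩] c) d = 0 := by
    rw [powF_pathProd_zero_single_singleton hx₂, hfac, zero_mul, Finsupp.single_zero]
  have cp_pow_ne_zero :
      powF (pathProd k (degCP d) (cupCP k d)) (Finsupp.single [⟨0, hd⟩] 1) d ≠ 0 := by
    obtain ⟨n, rfl⟩ : ∃ n, d = n + 1 := ⟨d - 1, by omega⟩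
    intro h
    have h₁ := powF_cupCP_apply_singleton (k := k) hd n n.lt_succ_self
    rw [h, Finsupp.zero_apply] at h₁
    exact zero_ne_one h₁
  refine ⟨cp_pow_ne_zero, ⟨?_, wedge_pow_eq_zero 1⟩, ?_⟩
  · rw [powF_pathProd_zero_single_singleton hx₂, Finsupp.smul_single_one, one_pow, mul_one]
  · rintro ⟨e, he_mul, he_one, he_deg⟩
    have hx₂_mem : Finsupp.single [⟨0, hd⟩] (1 : k) ∈ homogCP k d 2 :=
      Submodule.subset_span ⟨[⟨0, hd⟩], by simp [degW, degCP], rfl⟩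
    obtain ⟨c, hc⟩ := exists_eq_single_of_mem_homogCP_two hd (he_deg 2 _ hx₂_mem)
    refine cp_pow_ne_zero (e.map_eq_zero_iff.mp ?_)
    rw [map_powF e he_mul he_one, hc, wedge_pow_eq_zero]
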